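/- arXiv:1903.03755 — 3 statements merged into one kernel-verified Lean document; each statement's English description precedes it below -/
import Mathlib

section
/- Let D ≥ 2 and n = D^m for some natural number m ≥ 1. Then the minimum expected length of the uniform distribution on n symbols equals m: L_D(U_n) = m. -/
/-- `P` is a probability mass function on `n` symbols: all entries positive, summing to 1. -/
def IsPMF {n : ℕ} (P : Fin n → ℝ) : Prop :=
  (∀ i, 0 < P i) ∧ ∑ i, P i = 1

/-- `c` is a `D`-ary prefix code on `n` symbols: injective, and no codeword is a
prefix of another. -/
def IsPrefixCode {D n : ℕ} (c : Fin n → List (Fin D)) : Prop :=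
  Function.Injective c ∧ ∀ i j : Fin n, i ≠ j → ¬ (c i <+: c j)

/-- Expected length of the code `c` under the PMF `P`. -/
noncomputable def expLen {D n : ℕ} (P : Fin n → ℝ) (c : Fin n → List (Fin D)) : ℝ :=
  ∑ i, P i * ((c i).length : ℝ)

/-- Minimum expected length: infimum of expected lengths over all `D`-ary prefix codes. -/
noncomputable def minExpLen (D : ℕ) {n : ℕ} (P : Fin n → ℝ) : ℝ :=
  sInf {x : ℝ | ∃ c : Fin n → List (Fin D), IsPrefixCode c ∧ x = expLen P c}

/-- The uniform distribution on `n` symbols. -/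
noncomputable def unif (n : ℕ) : Fin n → ℝ := fun _ => 1 / n

lemma prefix_trichotomy {α : Type*} {l1 l2 l3 : List α} (h1 : l1 <+: l3) (h2 : l2 <+: l3) :
    l1 <+: l2 ∨ l2 <+: l1 := by
  rcases le_total l1.length l2.length with h | h
  · left
    rw [List.prefix_iff_eq_take.mp h1, List.prefix_iff_eq_take.mp h2]
    exact List.take_prefix_take_left h
  · right
    rw [List.prefix_iff_eq_take.mp h1, List.prefix_iff_eq_take.mp h2]
    exact List.take_prefix_take_left h

lemma card_ext {D L l : ℕ} (w : List (Fin D)) (hw : w.length = l) (hl : l ≤ L) :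
    (Finset.univ.filter (fun f : Fin L → Fin D => w <+: List.ofFn f)).card = D ^ (L - l) := by
  have : (Finset.univ.filter (fun f : Fin L → Fin D => w <+: List.ofFn f)).card
      = (Finset.univ : Finset (Fin (L - l) → Fin D)).card := by
    apply Finset.card_nbij' (fun f => fun j : Fin (L - l) => f ⟨l + j, by omega⟩)
      (fun h => fun k : Fin L => if hk : (k : ℕ) < l then w.get ⟨k, by omega⟩
        else h ⟨k - l, by omega⟩)
    · intro f _
      exact Finset.mem_univ _
    · intro h _
      simp only [Finset.coe_filter, Set.mem_setOf_eq, Finset.mem_filter, Finset.mem_univ, true_and]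
      rw [List.prefix_iff_eq_take]
      apply List.ext_get
      · simp [hw, hl]
      intro k hk1 hk2
      have hkl : k < l := by simpa [hw] using hk1
      simp [List.getElem_take, List.get_ofFn, hkl]
    · intro f hf
      simp only [Finset.coe_filter, Set.mem_setOf_eq, Finset.mem_filter, Finset.mem_univ, true_and] at hf
      funext k
      by_cases hk : (k : ℕ) < l
      · simp only [hk, dif_pos]
        have := hf.getElem (i := (k : ℕ)) (by omega)
        simp only [List.getElem_ofFn] at this
        rw [List.get_eq_getElem, this]
      · simp only [dif_neg hk]
        beta_reduce
        congr 1
        exact Fin.ext (by simp; omega)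
    · intro h _
      funext j
      have : ¬ ((l + (j : ℕ)) < l) := by omega
      simp only [this, dif_neg]
      exact congrArg h (Fin.ext (by simp))
  rw [this]
  simp [Finset.card_univ]

lemma kraft_nat {D n : ℕ} (c : Fin n → List (Fin D)) (hc : IsPrefixCode c)
    (L : ℕ) (hL : ∀ i, (c i).length ≤ L) :
    ∑ i, D ^ (L - (c i).length) ≤ D ^ L := by
  classical
  set S : Fin n → Finset (Fin L → Fin D) :=
    fun i => Finset.univ.filter (fun f => c i <+: List.ofFn f) with hS
  have hdisj : ∀ i ∈ (Finset.univ : Finset (Fin n)), ∀ j ∈ Finset.univ, i ≠ j →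
      Disjoint (S i) (S j) := by
    intro i _ j _ hij
    rw [Finset.disjoint_left]
    intro f hfi hfj
    simp only [hS, Finset.mem_filter, Finset.mem_univ, true_and] at hfi hfj
    rcases prefix_trichotomy hfi hfj with h | h
    · exact hc.2 i j hij h
    · exact hc.2 j i (Ne.symm hij) h
  calc ∑ i, D ^ (L - (c i).length) = ∑ i, (S i).card := by
        refine Finset.sum_congr rfl fun i _ => ?_
        rw [hS]
        rw [card_ext (c i) rfl (hL i)]
      _ = (Finset.univ.biUnion S).card := (Finset.card_biUnion hdisj).symm
      _ ≤ Fintype.card (Fin L → Fin D) := Finset.card_le_univ _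
      _ = D ^ L := by simp [Fintype.card_fun]

lemma bernoulli_zpow {D : ℕ} (hD : 2 ≤ D) (k : ℤ) : 1 + (k : ℝ) ≤ (D : ℝ) ^ k := by
  have hD1 : (1 : ℝ) ≤ (D : ℝ) - 1 := by
    have : (2 : ℝ) ≤ D := by exact_mod_cast hD
    linarith
  have hDpos : (0 : ℝ) < D := by positivity
  rcases le_or_gt 0 k with hk | hk
  · obtain ⟨a, rfl⟩ := Int.eq_ofNat_of_zero_le hk
    rw [zpow_natCast]
    have h1 : 1 + (a : ℝ) * ((D : ℝ) - 1) ≤ (1 + ((D : ℝ) - 1)) ^ a :=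
      one_add_mul_le_pow (by linarith) a
    have h2 : 1 + (a : ℝ) ≤ 1 + (a : ℝ) * ((D : ℝ) - 1) := by
      nlinarith [Nat.cast_nonneg (α := ℝ) a]
    calc 1 + ((a : ℤ) : ℝ) = 1 + (a : ℝ) := by push_cast; ring
      _ ≤ (1 + ((D : ℝ) - 1)) ^ a := le_trans h2 h1
      _ = (D : ℝ) ^ a := by ring_nf
  · have h1 : 1 + (k : ℝ) ≤ 0 := by
      have : (k : ℝ) ≤ -1 := by exact_mod_cast (by omega : k ≤ -1)
      linarith
    exact le_trans h1 (le_of_lt (zpow_pos hDpos k))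

lemma lower_bound {D m : ℕ} (hD : 2 ≤ D) (c : Fin (D ^ m) → List (Fin D))
    (hc : IsPrefixCode c) : (m : ℝ) ≤ expLen (unif (D ^ m)) c := by
  classical
  have hnpos : 0 < D ^ m := Nat.pow_pos (by omega)
  have hDpos : (0 : ℝ) < D := by positivity
  have hDne : (D : ℝ) ≠ 0 := ne_of_gt hDpos
  set l : Fin (D ^ m) → ℕ := fun i => (c i).length with hl
  set L : ℕ := Finset.univ.sup l with hLdef
  have hL : ∀ i, l i ≤ L := fun i => Finset.le_sup (Finset.mem_univ i)
  have hK : ∑ i, D ^ (L - l i) ≤ D ^ L := kraft_nat c hc L hL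
  have hn : (D : ℝ) ^ m = ((D ^ m : ℕ) : ℝ) := by push_cast; ring
  -- real Kraft with zpow exponent m - l i
  have hKr : ∑ i, (D : ℝ) ^ ((m : ℤ) - l i) ≤ (D : ℝ) ^ m := by
    have hcast : (∑ i, (D : ℝ) ^ (L - l i : ℕ)) ≤ (D : ℝ) ^ L := by
      exact_mod_cast hK
    have key : ∀ i : Fin (D ^ m), (D : ℝ) ^ ((m : ℤ) - l i)
        = (D : ℝ) ^ (L - l i : ℕ) * (D : ℝ) ^ ((m : ℤ) - L) := by
      intro i
      rw [← zpow_natCast (D : ℝ) (L - l i), ← zpow_add₀ hDne]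
      congr 1
      have := hL i
      omega
    calc ∑ i, (D : ℝ) ^ ((m : ℤ) - l i)
        = (∑ i, (D : ℝ) ^ (L - l i : ℕ)) * (D : ℝ) ^ ((m : ℤ) - L) := by
          rw [Finset.sum_mul]; exact Finset.sum_congr rfl fun i _ => key i
      _ ≤ (D : ℝ) ^ L * (D : ℝ) ^ ((m : ℤ) - L) := by
          apply mul_le_mul_of_nonneg_right hcast (le_of_lt (zpow_pos hDpos _))
      _ = (D : ℝ) ^ m := by
          rw [← zpow_natCast (D : ℝ) L, ← zpow_add₀ hDne, ← zpow_natCast (D : ℝ) m]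
          congr 1
          ring
  set N : ℝ := ((D ^ m : ℕ) : ℝ) with hN
  have hNpos : (0 : ℝ) < N := by rw [hN]; exact_mod_cast hnpos
  have hsum : N * m ≤ ∑ i, (l i : ℝ) := by
    have h1 : ∑ i : Fin (D ^ m), (1 + (((m : ℤ) - l i : ℤ) : ℝ)) ≤ (D : ℝ) ^ m :=
      le_trans (Finset.sum_le_sum fun i _ => bernoulli_zpow hD ((m : ℤ) - l i)) hKr
    rw [hn] at h1
    have h3 : ∑ i : Fin (D ^ m), (1 + (((m : ℤ) - l i : ℤ) : ℝ))
        = N + N * m - ∑ i, (l i : ℝ) := by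
      push_cast
      rw [Finset.sum_add_distrib, Finset.sum_sub_distrib]
      simp only [Finset.sum_const, Finset.card_univ, Fintype.card_fin, nsmul_eq_mul,
        mul_one, mul_comm]
      push_cast [hN]
      ring
    rw [h3] at h1
    linarith
  have hexp : expLen (unif (D ^ m)) c = (1 / N : ℝ) * ∑ i, (l i : ℝ) := by
    rw [expLen, Finset.mul_sum]
    refine Finset.sum_congr rfl fun i _ => ?_
    rw [unif, hN]
  rw [hexp]
  calc (m : ℝ) = (1 / N) * (N * m) := by field_simp
    _ ≤ (1 / N) * ∑ i, (l i : ℝ) := by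
        apply mul_le_mul_of_nonneg_left hsum
        positivity

/-- For n = D^m, the minimum expected length of the uniform
distribution equals m. -/
theorem stmt_3 (D m : ℕ) (hD : 2 ≤ D) (hm : 1 ≤ m) :
    minExpLen D (unif (D ^ m)) = m := by
  classical
  set n := D ^ m with hn
  have hnpos : 0 < n := Nat.pow_pos (by omega)
  have hnR : (0 : ℝ) < n := by exact_mod_cast hnpos
  -- canonical code
  set c0 : Fin n → List (Fin D) := fun i => List.ofFn (finFunctionFinEquiv.symm i) with hc0
  have hlen : ∀ i, (c0 i).length = m := fun i => List.length_ofFn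
  have hpc : IsPrefixCode c0 := by
    constructor
    · intro i j h
      exact finFunctionFinEquiv.symm.injective (List.ofFn_injective h)
    · intro i j hij hpre
      apply hij
      apply finFunctionFinEquiv.symm.injective
      apply List.ofFn_injective
      exact hpre.eq_of_length (by rw [hlen i, hlen j])
  have hval : expLen (unif n) c0 = (m : ℝ) := by
    rw [expLen]
    have : ∀ i : Fin n, unif n i * ((c0 i).length : ℝ) = (1 / n) * m := by
      intro i; rw [unif, hlen]
    rw [Finset.sum_congr rfl fun i _ => this i]
    rw [Finset.sum_const, Finset.card_univ, Fintype.card_fin, nsmul_eq_mul]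
    field_simp
  set A : Set ℝ := {x : ℝ | ∃ c : Fin n → List (Fin D), IsPrefixCode c ∧ x = expLen (unif n) c}
    with hA
  have hmem : (m : ℝ) ∈ A := ⟨c0, hpc, hval.symm⟩
  have hlb : ∀ x ∈ A, (m : ℝ) ≤ x := by
    rintro x ⟨c, hc, rfl⟩
    exact lower_bound hD c hc
  have hrw : minExpLen D (unif n) = sInf A := rfl
  rw [hrw]
  apply le_antisymm
  · exact csInf_le ⟨(m : ℝ), hlb⟩ hmem
  · exact le_csInf ⟨(m : ℝ), hmem⟩ hlb
end

section
/- Let D ≥ 2 and n = D^m for some natural number m ≥ 1. Let P be a PMF on n symbols whose entries are sorted nonincreasingly (P i ≥ P j whenever i ≤ j), and suppose the minimum expected length of P equals m: L_D(P) = m. Then the sum of the lowest D probabilities of P is greater than or equal to its highest probability: ∑_{i=n−D}^{n−1} P i ≥ P 0. -/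
/-!
If `P 0` exceeded the mass `S` of the last `D` symbols, a better code than the fixed-length one
would exist: give symbol `0` the word `(D-1)^(m-1)`, replace the word `0^m` by the `D` words
`0^m d` for the last `D` symbols, and keep the `m`-digit base-`D` expansion for every other
symbol. This prefix code has expected length `m - P 0 + S`, so `L_D(P) = m` forces `P 0 ≤ S`.
When `m ≤ 1` the last `D` symbols are all of them and there is nothing to prove.
-/

section BigEndian

variable (D : ℕ) [NeZero D]

def bigEndianWord : ℕ → ℕ → List (Fin D)
  | 0, _ => []
  | k + 1, a => bigEndianWord k (a / D) ++ [Fin.ofNat D a]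

variable {D}

@[simp]
theorem length_bigEndianWord (k a : ℕ) : (bigEndianWord D k a).length = k := by
  induction k generalizing a <;> simp [bigEndianWord, *]

theorem bigEndianWord_add (k l a : ℕ) :
    bigEndianWord D (k + l) a = bigEndianWord D k (a / D ^ l) ++ bigEndianWord D l a := by
  induction l generalizing a with
  | zero => simp [bigEndianWord]
  | succ l ih =>
    rw [← add_assoc, bigEndianWord, ih, bigEndianWord, List.append_assoc,
      Nat.div_div_eq_div_mul, ← pow_succ']

theorem bigEndianWord_injOn (k : ℕ) : Set.InjOn (bigEndianWord D k) (Set.Iio (D ^ k)) := by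
  induction k with
  | zero => intro a ha b hb _; simp_all
  | succ k ih =>
    intro a ha b hb hab
    obtain ⟨hdiv, hmod⟩ := List.append_inj hab (by simp)
    have hdiv : a / D = b / D := ih (Nat.div_lt_of_lt_mul (by rw [← pow_succ']; exact ha))
      (Nat.div_lt_of_lt_mul (by rw [← pow_succ']; exact hb)) hdiv
    have hmod : a % D = b % D := by simpa [Fin.ext_iff, Fin.val_ofNat] using hmod
    rw [← Nat.div_add_mod a D, ← Nat.div_add_mod b D, hdiv, hmod]

theorem eq_div_of_bigEndianWord_isPrefix {k l a b : ℕ} (ha : a < D ^ k) (hb : b < D ^ l)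
    (h : bigEndianWord D k a <+: bigEndianWord D l b) : k ≤ l ∧ a = b / D ^ (l - k) := by
  have hkl : k ≤ l := by simpa using h.length_le
  refine ⟨hkl, bigEndianWord_injOn k ha ?_ ?_⟩
  · rw [Set.mem_Iio, Nat.div_lt_iff_lt_mul (pow_pos (Nat.pos_of_neZero D) _), ← pow_add,
      Nat.add_sub_cancel' hkl]
    exact hb
  · rw [← Nat.add_sub_cancel' hkl, bigEndianWord_add] at h
    exact (List.prefix_of_prefix_length_le h (List.prefix_append _ _) (by simp)).eq_of_length
      (by simp)

theorem isPrefixCode_bigEndianWord {n : ℕ} (len val : Fin n → ℕ)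
    (hval : ∀ i, val i < D ^ len i)
    (hsep : ∀ i j, i ≠ j → len i ≤ len j → val i ≠ val j / D ^ (len j - len i)) :
    IsPrefixCode fun i => bigEndianWord D (len i) (val i) := by
  have hfree : ∀ i j, i ≠ j →
      ¬ bigEndianWord D (len i) (val i) <+: bigEndianWord D (len j) (val j) := by
    intro i j hij h
    obtain ⟨hlen, hval⟩ := eq_div_of_bigEndianWord_isPrefix (hval i) (hval j) h
    exact hsep i j hij hlen hval
  refine ⟨fun i j hij => ?_, hfree⟩
  by_contra hne
  exact hfree i j hne (by simp only at hij; rw [hij])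

end BigEndian

section ShortCode

variable (D m : ℕ)

def shortCodeLen (i : ℕ) : ℕ :=
  if i = 0 then m - 1 else if i < D ^ m - D then m else m + 1

-- Read in base `D` with `shortCodeLen` digits, symbol `0` gets `(D-1)^(m-1)` and the last `D`
-- symbols get `0^m d`.
def shortCodeVal (i : ℕ) : ℕ :=
  if i = 0 then D ^ (m - 1) - 1 else if i < D ^ m - D then i else i - (D ^ m - D)

def shortCode [NeZero D] (i : Fin (D ^ m)) : List (Fin D) :=
  bigEndianWord D (shortCodeLen D m i) (shortCodeVal D m i)

variable {D m}

theorem isPrefixCode_shortCode [NeZero D] (hD : 2 ≤ D) (hm : 2 ≤ m) :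
    IsPrefixCode (shortCode D m) := by
  have hDm : D ^ m = D * D ^ (m - 1) := by rw [← pow_succ']; congr; omega
  have hD_le : D ≤ D ^ (m - 1) := Nat.le_self_pow (by omega) D
  have hD_lt : D < D ^ m := by rw [hDm]; nlinarith
  refine isPrefixCode_bigEndianWord _ _ (fun i => ?_) (fun i j hij hlen => ?_)
  · have := i.isLt
    unfold shortCodeLen shortCodeVal
    split_ifs
    · omega
    · omega
    · have : D ≤ D ^ m * D := Nat.le_mul_of_pos_left D (by positivity)
      rw [pow_succ]; omega
  have hij : (i : ℕ) ≠ j := Fin.val_ne_of_ne hij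
  have hj_lt := j.isLt
  have hcases : ∀ x : Fin (D ^ m), (x : ℕ) = 0 ∨ ((x : ℕ) ≠ 0 ∧ (x : ℕ) < D ^ m - D) ∨
      ((x : ℕ) ≠ 0 ∧ ¬ (x : ℕ) < D ^ m - D) := by
    intro x; omega
  have e1 : m - (m - 1) = 1 := by omega
  have e2 : m + 1 - (m - 1) = 2 := by omega
  rcases hcases i with hi | hi | hi <;> rcases hcases j with hj | hj | hj <;>
    simp only [shortCodeLen, shortCodeVal, hi, hj, e1, e2, if_true, if_false,
      Nat.add_sub_cancel_left, Nat.sub_self, pow_zero, pow_one, Nat.div_one] at hlen ⊢ <;>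
    try omega
  · have : (j : ℕ) / D < D ^ (m - 1) - 1 := by
      apply Nat.div_lt_of_lt_mul
      rw [Nat.mul_sub_one, ← hDm]
      exact hj.2
    omega
  · rw [Nat.div_eq_of_lt ((show (j : ℕ) - (D ^ m - D) < D by omega).trans_le
      (Nat.le_self_pow two_ne_zero D))]
    omega
  · rw [Nat.div_eq_of_lt (show (j : ℕ) - (D ^ m - D) < D by omega)]
    exact hi.1

theorem cast_shortCodeLen (hD : 2 ≤ D) (hm : 2 ≤ m) (i : ℕ) :
    (shortCodeLen D m i : ℝ) =
      m - (if i = 0 then 1 else 0) + (if D ^ m - D ≤ i then 1 else 0) := by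
  have : D < D ^ m := by
    simpa using Nat.pow_lt_pow_right hD (show 1 < m by omega)
  unfold shortCodeLen
  split_ifs <;> first | omega | push_cast [Nat.cast_sub (show 1 ≤ m by omega)]; ring

theorem expLen_shortCode [NeZero D] (hD : 2 ≤ D) (hm : 2 ≤ m) (P : Fin (D ^ m) → ℝ)
    (hP : ∑ i, P i = 1) :
    expLen P (shortCode D m) = m - P ⟨0, pow_pos (Nat.pos_of_neZero D) m⟩ +
      ∑ i ∈ Finset.univ.filter (fun i : Fin (D ^ m) => D ^ m - D ≤ (i : ℕ)), P i := by
  simp only [expLen, shortCode, length_bigEndianWord, cast_shortCodeLen hD hm, mul_add, mul_sub,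
    Finset.sum_add_distrib, Finset.sum_sub_distrib, ← Finset.sum_mul, hP, one_mul, mul_ite,
    mul_one, mul_zero, Finset.sum_filter]
  congr
  rw [Finset.sum_eq_single_of_mem _ (Finset.mem_univ ⟨0, _⟩)
    fun i _ hi => if_neg (Fin.val_ne_of_ne hi)]
  rfl

end ShortCode

theorem minExpLen_le_expLen {D n : ℕ} {P : Fin n → ℝ} (hP : ∀ i, 0 ≤ P i)
    {c : Fin n → List (Fin D)} (hc : IsPrefixCode c) : minExpLen D P ≤ expLen P c :=
  csInf_le ⟨0, by
    rintro _ ⟨c, -, rfl⟩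
    exact Finset.sum_nonneg fun i _ => mul_nonneg (hP i) (Nat.cast_nonneg _)⟩ ⟨c, hc, rfl⟩

/-- For n = D^m, a nonincreasing PMF with minimum expected length m
has its lowest D probabilities summing to at least its highest probability. -/
theorem stmt_6 (D m : ℕ) (hD : 2 ≤ D)
    (P : Fin (D ^ m) → ℝ) (hP : IsPMF P)
    (hopt : minExpLen D P = m) :
    P ⟨0, pow_pos (by omega) m⟩ ≤
      ∑ i ∈ Finset.univ.filter (fun i : Fin (D ^ m) => D ^ m - D ≤ (i : ℕ)), P i := by
  rcases Nat.lt_or_ge m 2 with hm | hm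
  · have hall : Finset.univ.filter (fun i : Fin (D ^ m) => D ^ m - D ≤ (i : ℕ)) =
        Finset.univ := by
      have : D ^ m ≤ D := by interval_cases m <;> simp; omega
      exact Finset.filter_true_of_mem fun i _ => by omega
    rw [hall]
    exact Finset.single_le_sum (fun i _ => (hP.1 i).le) (Finset.mem_univ _)
  · have : NeZero D := ⟨by omega⟩
    have hle := minExpLen_le_expLen (fun i => (hP.1 i).le) (isPrefixCode_shortCode hD hm)
    rw [hopt, expLen_shortCode hD hm P hP.2] at hle
    linarith
end

section
/- Let D ≥ 2 and n ≥ 2, and let m be the unique natural number with D^m ≤ n < D^{m+1}. Let k = D^m − ⌈(n − D^m)/(D − 1)⌉, where the ceiling is taken over the rationals. Let P be a PMF on n symbols with L_D(P) = L_D(U_n). Then there exists a D-ary prefix code c on n symbols whose expected length under P equals L_D(P) and in which exactly k codewords have length m and the remaining n − k codewords have length m + 1. -/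
open Finset InformationTheory

theorem uniquelyDecodable_of_prefixFree {α : Type*} {S : Set (List α)} (hnil : [] ∉ S)
    (hS : ∀ u ∈ S, ∀ v ∈ S, u <+: v → u = v) : UniquelyDecodable S := by
  intro L₁
  induction L₁ with
  | nil =>
    rintro (_ | ⟨v, L₂⟩) - h₂ h
    · rfl
    · exact absurd (List.append_eq_nil_iff.mp h.symm).1 (ne_of_mem_of_not_mem (h₂ v (by simp)) hnil)
  | cons u L₁ ih =>
    rintro (_ | ⟨v, L₂⟩) h₁ h₂ h
    · exact absurd (List.append_eq_nil_iff.mp h).1 (ne_of_mem_of_not_mem (h₁ u (by simp)) hnil)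
    · simp only [List.flatten_cons] at h
      have huv : u = v := by
        rcases List.prefix_or_prefix_of_prefix (h ▸ List.prefix_append u _)
            (List.prefix_append v _) with huv | hvu
        · exact hS u (h₁ u (by simp)) v (h₂ v (by simp)) huv
        · exact (hS v (h₂ v (by simp)) u (h₁ u (by simp)) hvu).symm
      subst huv
      rw [ih L₂ (fun w hw => h₁ w (by simp [hw])) (fun w hw => h₂ w (by simp [hw]))
        (List.append_cancel_left h)]

theorem one_add_mul_sub_one_le_zpow {x : ℝ} (hx : 0 < x) (j : ℤ) : 1 + j * (x - 1) ≤ x ^ j := by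
  obtain ⟨k, rfl | rfl⟩ := j.eq_nat_or_neg
  · simpa using one_add_mul_le_pow (a := x - 1) (by linarith) k
  · have hinv : 1 - x ≤ x⁻¹ - 1 := by
      have : x⁻¹ - 1 - (1 - x) = (x - 1) ^ 2 / x := by field_simp; ring
      linarith [show 0 ≤ (x - 1) ^ 2 / x by positivity]
    calc 1 + ((-k : ℤ) : ℝ) * (x - 1) = 1 + k * (1 - x) := by push_cast; ring
      _ ≤ 1 + k * (x⁻¹ - 1) := by gcongr
      _ ≤ (1 + (x⁻¹ - 1)) ^ k := one_add_mul_le_pow (by linarith [inv_pos.2 hx]) k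
      _ = x ^ (-(k : ℤ)) := by simp [zpow_neg]

namespace IsPrefixCode

variable {D n : ℕ} {c : Fin n → List (Fin D)}

theorem uniquelyDecodable (hc : IsPrefixCode c) (hn : 2 ≤ n) :
    UniquelyDecodable (Set.range c) := by
  refine uniquelyDecodable_of_prefixFree ?_ ?_
  · rintro ⟨i, hi⟩
    have : Nontrivial (Fin n) := Fin.nontrivial_iff_two_le.mpr hn
    obtain ⟨j, hj⟩ := exists_ne i
    exact hc.2 i j hj.symm (hi ▸ List.nil_prefix)
  · rintro _ ⟨i, rfl⟩ _ ⟨j, rfl⟩ hij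
    by_contra hne
    exact hc.2 i j (fun h => hne (h ▸ rfl)) hij

theorem sum_zpow_neg_length_le_one (hc : IsPrefixCode c) (hn : 2 ≤ n) (hD : 0 < D) :
    ∑ i, (D : ℝ) ^ (-((c i).length : ℤ)) ≤ 1 := by
  have : Nonempty (Fin D) := ⟨⟨0, hD⟩⟩
  have hK := kraft_mcmillan_inequality (S := univ.image c) (by simpa using hc.uniquelyDecodable hn)
  rw [sum_image fun i _ j _ h => hc.1 h] at hK
  simpa [zpow_neg, one_div, inv_pow] using hK

theorem sub_one_mul_le (hc : IsPrefixCode c) (hn : 2 ≤ n) (hD : 0 < D) (t : ℕ) :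
    ((D : ℝ) - 1) * (n * t - ∑ i, ((c i).length : ℝ)) ≤ D ^ t - n := by
  have hD' : (0 : ℝ) < D := by exact_mod_cast hD
  refine le_sub_iff_add_le.mpr ?_
  calc ((D : ℝ) - 1) * (n * t - ∑ i, ((c i).length : ℝ)) + n
      = ∑ i, (1 + (((t : ℤ) - (c i).length : ℤ) : ℝ) * (D - 1)) := by
        push_cast
        simp only [sum_add_distrib, ← sum_mul, sum_sub_distrib, sum_const, card_univ,
          Fintype.card_fin, nsmul_eq_mul]
        ring
    _ ≤ ∑ i, (D : ℝ) ^ ((t : ℤ) - (c i).length) :=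
        sum_le_sum fun i _ => one_add_mul_sub_one_le_zpow hD' _
    _ = D ^ t * ∑ i, (D : ℝ) ^ (-((c i).length : ℤ)) := by
        rw [mul_sum]
        refine sum_congr rfl fun i _ => ?_
        rw [sub_eq_add_neg, zpow_add₀ hD'.ne', zpow_natCast]
    _ ≤ D ^ t := mul_le_of_le_one_right (by positivity) (hc.sum_zpow_neg_length_le_one hn hD)

theorem mul_le_sum_length_add (hc : IsPrefixCode c) (hn : 2 ≤ n) (hD : 2 ≤ D) (t : ℕ) :
    n * t ≤ ∑ i, (c i).length + (D ^ t - n) / (D - 1) := by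
  by_contra! h
  set q := (D ^ t - n) / (D - 1)
  have h1 : (q + 1 : ℝ) ≤ n * t - ∑ i, ((c i).length : ℝ) := by
    have : q + 1 + ∑ i, (c i).length ≤ n * t := by omega
    have : ((q + 1 + ∑ i, (c i).length : ℕ) : ℝ) ≤ ((n * t : ℕ) : ℝ) := by exact_mod_cast this
    push_cast at this
    linarith
  have hD1 : (1 : ℝ) ≤ D - 1 := by
    have : (2 : ℝ) ≤ D := by exact_mod_cast hD
    linarith
  have h2 : ((D : ℝ) - 1) * (q + 1) ≤ D ^ t - n :=
    (mul_le_mul_of_nonneg_left h1 (by linarith)).trans (hc.sub_one_mul_le hn (by omega) t)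
  have hnt : n ≤ D ^ t := by
    have : (n : ℝ) ≤ D ^ t := by nlinarith [show (0 : ℝ) ≤ q by positivity]
    exact_mod_cast this
  have h3 : D ^ t - n < (D - 1) * (q + 1) := Nat.lt_mul_div_succ _ (by omega)
  have h3' : ((D ^ t - n : ℕ) : ℝ) < ((D - 1 : ℕ) : ℝ) * (q + 1) := by exact_mod_cast h3
  push_cast [Nat.cast_sub hnt, Nat.cast_sub (by omega : 1 ≤ D)] at h3'
  linarith

end IsPrefixCode

theorem pow_succ_sub_div_sub_one_le {D n m : ℕ} (hm : D ^ m ≤ n) :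
    (D ^ (m + 1) - n) / (D - 1) ≤ D ^ m :=
  Nat.div_le_of_le_mul <| calc
    D ^ (m + 1) - n ≤ D ^ m * D - D ^ m := by rw [pow_succ]; omega
    _ = (D - 1) * D ^ m := by rw [Nat.sub_one_mul, mul_comm]

theorem pow_sub_ceil_div_eq {D n m : ℕ} (hD : 2 ≤ D) (hm : D ^ m ≤ n) (hm' : n < D ^ (m + 1)) :
    D ^ m - (⌈((n - D ^ m : ℕ) : ℚ) / ((D : ℚ) - 1)⌉).toNat = (D ^ (m + 1) - n) / (D - 1) := by
  have hD1 : (0 : ℚ) < D - 1 := by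
    have : (2 : ℚ) ≤ D := by exact_mod_cast hD
    linarith
  have hcast : ((n - D ^ m : ℕ) : ℚ) = n - D ^ m := by push_cast [hm]; ring
  have hle := Int.le_ceil (((n - D ^ m : ℕ) : ℚ) / ((D : ℚ) - 1))
  have hlt := Int.ceil_lt_add_one (((n - D ^ m : ℕ) : ℚ) / ((D : ℚ) - 1))
  have he0 := Int.ceil_nonneg (a := ((n - D ^ m : ℕ) : ℚ) / ((D : ℚ) - 1)) (by positivity)
  generalize ⌈((n - D ^ m : ℕ) : ℚ) / ((D : ℚ) - 1)⌉ = e at hle hlt he0 ⊢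
  lift e to ℕ using he0
  rw [hcast, div_le_iff₀ hD1] at hle
  rw [hcast, ← sub_lt_iff_lt_add, lt_div_iff₀ hD1] at hlt
  have hle' : (n : ℤ) - D ^ m ≤ e * (D - 1) := by exact_mod_cast hle
  have hlt' : ((e : ℤ) - 1) * (D - 1) < n - D ^ m := by exact_mod_cast hlt
  have hpow : (D : ℤ) ^ (m + 1) = D ^ m * (D - 1) + D ^ m := by ring
  have hem : e ≤ D ^ m := by
    have : ((e : ℤ) - 1) * (D - 1) < D ^ m * (D - 1) := by linarith
    have : (e : ℤ) - 1 < D ^ m := lt_of_mul_lt_mul_right this (by omega)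
    exact_mod_cast Int.le_of_sub_one_lt this
  rw [Int.toNat_natCast]
  symm
  apply Nat.div_eq_of_lt_le
  · zify [hem, hm'.le, (by omega : 1 ≤ D)]
    linarith
  · zify [hem, hm'.le, (by omega : 1 ≤ D)]
    linarith

theorem exists_card_eq_mul_sum_le {ι : Type*} [Fintype ι] (w : ι → ℝ) {k : ℕ}
    (hk : k ≤ Fintype.card ι) :
    ∃ s : Finset ι, #s = k ∧ k * ∑ i, w i ≤ Fintype.card ι * ∑ i ∈ s, w i := by
  classical
  obtain ⟨s, hs, hmax⟩ := exists_max_image ((univ : Finset ι).powersetCard k)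
    (fun s => ∑ i ∈ s, w i) (powersetCard_nonempty.mpr (by simpa using hk))
  have hsk : #s = k := (mem_powersetCard.mp hs).2
  have hswap : ∀ i ∈ s, ∀ j ∈ sᶜ, w j ≤ w i := by
    intro i hi j hj
    have hj' : j ∉ s.erase i := fun h => mem_compl.mp hj (mem_of_mem_erase h)
    have := hmax (insert j (s.erase i)) (mem_powersetCard.mpr ⟨subset_univ _, by
      rw [card_insert_of_notMem hj', card_erase_of_mem hi, hsk]
      have : 0 < k := hsk ▸ card_pos.mpr ⟨i, hi⟩
      omega⟩)
    rw [sum_insert hj', sum_erase_eq_sub hi] at this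
    linarith
  have hcross : (k : ℝ) * ∑ j ∈ sᶜ, w j ≤ #sᶜ * ∑ i ∈ s, w i := by
    have := sum_le_sum fun i hi => sum_le_sum fun j hj => hswap i hi j hj
    simpa [hsk, sum_mul, mul_comm] using this
  refine ⟨s, hsk, ?_⟩
  have hcard : (Fintype.card ι : ℝ) = k + #sᶜ := by
    rw [← hsk]; exact_mod_cast (card_add_card_compl s).symm
  rw [← sum_add_sum_compl s, hcard]
  linarith

theorem exists_prefixCode_length_eq {D n m : ℕ} (A : Finset (Fin n)) (hA : #A ≤ D ^ m)
    (hAc : #Aᶜ ≤ (D ^ m - #A) * D) :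
    ∃ c : Fin n → List (Fin D), IsPrefixCode c ∧
      (∀ i ∈ A, (c i).length = m) ∧ ∀ i ∉ A, (c i).length = m + 1 := by
  classical
  obtain ⟨f⟩ : Nonempty (A ↪ List.Vector (Fin D) m) :=
    Function.Embedding.nonempty_of_card_le (by simpa [card_vector] using hA)
  let free : Finset (List.Vector (Fin D) m) := univ \ univ.map f
  have hfree : #free = D ^ m - #A := by
    rw [card_univ_sdiff, card_map, card_univ, Fintype.card_coe, card_vector, Fintype.card_fin]
  obtain ⟨g⟩ : Nonempty ({i // i ∉ A} ↪ free × Fin D) :=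
    Function.Embedding.nonempty_of_card_le (by
      rwa [Fintype.card_prod, Fintype.card_coe, hfree, Fintype.card_fin,
        Fintype.card_subtype_compl, Fintype.card_coe, ← card_compl])
  let c : Fin n → List (Fin D) := fun i =>
    if h : i ∈ A then (f ⟨i, h⟩).toList else (g ⟨i, h⟩).1.1.toList ++ [(g ⟨i, h⟩).2]
  have hlenA : ∀ i ∈ A, (c i).length = m := by intro i hi; simp [c, hi]
  have hlenB : ∀ i ∉ A, (c i).length = m + 1 := by intro i hi; simp [c, hi]
  have hinj : Function.Injective c := by
    refine Function.Injective.dite (· ∈ A) (f := fun a => (f a).toList)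
      (f' := fun a => (g a).1.1.toList ++ [(g a).2]) ?_ ?_ ?_
    · exact List.Vector.toList_injective.comp f.injective
    · intro i j h
      obtain ⟨h1, h2⟩ := List.append_inj h (by simp)
      exact g.injective (Prod.ext (Subtype.ext (List.Vector.toList_injective h1))
        (List.singleton_injective h2))
    · intro i j hi hj h
      simpa using congrArg List.length h
  refine ⟨c, ⟨hinj, fun i j hij hpre => ?_⟩, hlenA, hlenB⟩
  by_cases hlen : (c i).length = (c j).length
  · exact hij (hinj (hpre.eq_of_length hlen))
  have hlt := lt_of_le_of_ne hpre.length_le hlen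
  have hi : i ∈ A := by by_contra hi; by_cases hj : j ∈ A <;> simp_all
  have hj : j ∉ A := by intro hj; simp_all
  have hfg : (f ⟨i, hi⟩).toList = (g ⟨j, hj⟩).1.1.toList := by
    have := List.prefix_iff_eq_take.mp hpre
    simpa [c, hi, hj] using this
  have hfree_j := (g ⟨j, hj⟩).1.2
  simp only [free, mem_sdiff, mem_map] at hfree_j
  exact hfree_j.2 ⟨_, mem_univ _, List.Vector.toList_injective hfg⟩

theorem exists_prefixCode_length_eq_of_card_eq {D n m : ℕ} (hD : 0 < D) (hm : D ^ m ≤ n)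
    (hm' : n < D ^ (m + 1)) (A : Finset (Fin n)) (hA : #A = (D ^ (m + 1) - n) / (D - 1)) :
    ∃ c : Fin n → List (Fin D), IsPrefixCode c ∧
      (∀ i ∈ A, (c i).length = m) ∧ ∀ i ∉ A, (c i).length = m + 1 := by
  refine exists_prefixCode_length_eq A (hA ▸ pow_succ_sub_div_sub_one_le hm) ?_
  have h1 : #A * (D - 1) ≤ D ^ (m + 1) - n := hA ▸ Nat.div_mul_le_self _ _
  have h2 : (D ^ m - #A) * D = D ^ (m + 1) - #A * D := by rw [Nat.sub_mul, pow_succ]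
  have h3 : #A * D = #A * (D - 1) + #A := by
    rw [Nat.mul_sub_one, Nat.sub_add_cancel (Nat.le_mul_of_pos_right _ hD)]
  rw [card_compl, Fintype.card_fin]
  omega

section ExpectedLength

variable {D n : ℕ}

theorem minExpLen_le {P : Fin n → ℝ} (hP : ∀ i, 0 ≤ P i) {c : Fin n → List (Fin D)}
    (hc : IsPrefixCode c) : minExpLen D P ≤ expLen P c :=
  csInf_le ⟨0, by
    rintro _ ⟨c', -, rfl⟩
    exact sum_nonneg fun i _ => mul_nonneg (hP i) (Nat.cast_nonneg _)⟩ ⟨c, hc, rfl⟩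

theorem le_minExpLen {P : Fin n → ℝ} {b : ℝ} {c : Fin n → List (Fin D)} (hc : IsPrefixCode c)
    (h : ∀ c' : Fin n → List (Fin D), IsPrefixCode c' → b ≤ expLen P c') : b ≤ minExpLen D P :=
  le_csInf ⟨_, c, hc, rfl⟩ fun _ ⟨c', hc', hx⟩ => hx ▸ h c' hc'

theorem expLen_unif (c : Fin n → List (Fin D)) :
    expLen (unif n) c = (∑ i, ((c i).length : ℝ)) / n := by
  simp only [expLen, unif, sum_div]
  exact sum_congr rfl fun i _ => by ring

theorem expLen_eq_of_length_eq {m : ℕ} (Q : Fin n → ℝ) {c : Fin n → List (Fin D)}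
    (A : Finset (Fin n)) (hA : ∀ i ∈ A, (c i).length = m) (hAc : ∀ i ∉ A, (c i).length = m + 1) :
    expLen Q c = (m + 1) * ∑ i, Q i - ∑ i ∈ A, Q i := by
  classical
  have hterm : ∀ i, Q i * (c i).length = (m + 1) * Q i - if i ∈ A then Q i else 0 := by
    intro i
    by_cases hi : i ∈ A <;> simp [hi, hA, hAc] <;> ring
  simp only [expLen, hterm, sum_sub_distrib, ← mul_sum, sum_ite_mem, univ_inter]

end ExpectedLength

theorem minExpLen_unif {D n m : ℕ} (hD : 2 ≤ D) (hn : 2 ≤ n) (hm : D ^ m ≤ n)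
    (hm' : n < D ^ (m + 1)) :
    minExpLen D (unif n) = m + 1 - ((D ^ (m + 1) - n) / (D - 1) : ℕ) / n := by
  set k := (D ^ (m + 1) - n) / (D - 1)
  obtain ⟨A, -, hA⟩ := exists_subset_card_eq (s := (univ : Finset (Fin n))) (n := k)
    (by simpa using (pow_succ_sub_div_sub_one_le hm).trans hm)
  obtain ⟨c, hc, hlenA, hlenB⟩ := exists_prefixCode_length_eq_of_card_eq (by omega) hm hm' A hA
  have hn0 : (0 : ℝ) < n := by positivity
  refine le_antisymm ((minExpLen_le (fun _ => by simp [unif]) hc).trans_eq ?_)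
    (le_minExpLen hc fun c' hc' => ?_)
  · rw [expLen_eq_of_length_eq _ A hlenA hlenB]
    simp only [unif, one_div, sum_const, card_univ, Fintype.card_fin, nsmul_eq_mul, hA]
    field_simp
  · have hsum : ((n * (m + 1) : ℕ) : ℝ) ≤ ((∑ i, (c' i).length + k : ℕ) : ℝ) := by
      exact_mod_cast hc'.mul_le_sum_length_add hn hD (m + 1)
    push_cast at hsum
    rw [expLen_unif, le_div_iff₀ hn0, sub_mul, div_mul_cancel₀ _ hn0.ne']
    linarith

/-- If L_D(P) = L_D(U_n), then P has an optimal prefix code with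
exactly k codewords of length m and n − k codewords of length m + 1. -/
theorem stmt_11 (D n m : ℕ) (hD : 2 ≤ D) (hn : 2 ≤ n)
    (hm : D ^ m ≤ n) (hm' : n < D ^ (m + 1))
    (k : ℕ) (hk : k = D ^ m - (⌈((n - D ^ m : ℕ) : ℚ) / ((D : ℚ) - 1)⌉).toNat)
    (P : Fin n → ℝ) (hP : IsPMF P)
    (hmax : minExpLen D P = minExpLen D (unif n)) :
    ∃ c : Fin n → List (Fin D), IsPrefixCode c ∧
      expLen P c = minExpLen D P ∧
      (Finset.univ.filter (fun i : Fin n => (c i).length = m)).card = k ∧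
      (Finset.univ.filter (fun i : Fin n => (c i).length = m + 1)).card = n - k := by
  classical
  rw [pow_sub_ceil_div_eq hD hm hm'] at hk
  obtain ⟨A, hA, hPA⟩ := exists_card_eq_mul_sum_le P (k := k)
    (by simpa [hk] using (pow_succ_sub_div_sub_one_le hm).trans hm)
  obtain ⟨c, hc, hlenA, hlenB⟩ :=
    exists_prefixCode_length_eq_of_card_eq (by omega) hm hm' A (hA.trans hk)
  have hshort : univ.filter (fun i => (c i).length = m) = A := by
    ext i
    by_cases hi : i ∈ A <;> simp [hi, hlenA, hlenB]
  have hlong : univ.filter (fun i => (c i).length = m + 1) = Aᶜ := by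
    ext i
    by_cases hi : i ∈ A <;> simp [hi, hlenA, hlenB]
  refine ⟨c, hc, le_antisymm ?_ (minExpLen_le (fun i => (hP.1 i).le) hc), ?_, ?_⟩
  · have hn0 : (0 : ℝ) < n := by positivity
    have hmass : (k : ℝ) / n ≤ ∑ i ∈ A, P i := by
      rw [div_le_iff₀ hn0]
      simpa [hP.2, mul_comm] using hPA
    rw [hmax, minExpLen_unif hD hn hm hm', ← hk, expLen_eq_of_length_eq P A hlenA hlenB, hP.2]
    linarith
  · rw [hshort, hA]
  · rw [hlong, card_compl, hA, Fintype.card_fin]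
end
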